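/- arXiv:2006.11256 — 4 statements merged into one kernel-verified Lean document; each statement's English description precedes it below -/
import Mathlib

section
/- Let n ≥ 1 and let W, W' : Fin n → ℝ with W_i ≤ W'_i for all i, and let 0 < ξ ≤ ξ'. If θ and θ' are real numbers with ∑_{i} max(θ − W_i, 0) = ξ and ∑_{i} max(θ' − W'_i, 0) = ξ', then for every i: W_i ≤ max(θ, W_i) ≤ max(θ', W'_i). That is, the water-filled workload vector dominates the original vector and is monotone in the workload vector and in the amount placed; this is the one-arrival core of the monotonicity Lemma 5.1 for water-filling job classes. -/
/-- The water-filled workload vector dominates the original one, and is monotone in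
the workload vector (componentwise) and in the amount of workload placed: the
one-arrival core of the coupling monotonicity for water-filling job classes. -/
theorem water_filled_vector_monotone
    (n : ℕ) (hn : 1 ≤ n) (W W' : Fin n → ℝ) (hWW' : ∀ i, W i ≤ W' i)
    (ξ ξ' : ℝ) (hξ : 0 < ξ) (hξξ' : ξ ≤ ξ')
    (θ θ' : ℝ)
    (hθ : ∑ i : Fin n, max (θ - W i) 0 = ξ)
    (hθ' : ∑ i : Fin n, max (θ' - W' i) 0 = ξ') :
    ∀ i, W i ≤ max θ (W i) ∧ max θ (W i) ≤ max θ' (W' i) := by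
  have hθθ' : θ ≤ θ' := by
    by_contra h
    push_neg at h
    have hpos : ∃ i ∈ Finset.univ (α := Fin n), 0 < max (θ - W i) 0 := by
      by_contra hc
      push_neg at hc
      have : ξ ≤ 0 := by
        rw [← hθ]
        exact Finset.sum_nonpos (fun i hi => hc i hi)
      linarith
    obtain ⟨j, _, hj⟩ := hpos
    have hlt : ∑ i : Fin n, max (θ' - W' i) 0 < ∑ i : Fin n, max (θ - W i) 0 := by
      refine Finset.sum_lt_sum (fun i _ => max_le_max (by linarith [hWW' i]) le_rfl)
        ⟨j, Finset.mem_univ j, ?_⟩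
      have hjW : W j < θ := by
        by_contra hW
        push_neg at hW
        simp [max_eq_right (by linarith : θ - W j ≤ 0)] at hj
      have h2 : max (θ' - W' j) 0 < θ - W j := by
        rcases le_or_gt (θ' - W' j) 0 with h1 | h1
        · rw [max_eq_right h1]; linarith
        · rw [max_eq_left h1.le]; linarith [hWW' j]
      calc max (θ' - W' j) 0 < θ - W j := h2
        _ ≤ max (θ - W j) 0 := le_max_left _ _
    rw [hθ, hθ'] at hlt
    linarith
  intro i
  exact ⟨le_max_right _ _, max_le_max hθθ' (hWW' i)⟩
end

section
/- Let n ≥ 1, W : Fin n → ℝ, and ξ, ξ' > 0. Suppose θ satisfies ∑_{i} max(θ − W_i, 0) = ξ, and θ' satisfies ∑_{i} max(θ' − max(θ, W_i), 0) = ξ' (i.e., θ' is a water-filling level for the water-filled vector and amount ξ'). Then θ' ≥ θ, ∑_{i} max(θ' − W_i, 0) = ξ + ξ', and max(θ', max(θ, W_i)) = max(θ', W_i) for every i. In words: water-filling an amount ξ and then an amount ξ' on the same set of servers produces the same workload vector as water-filling the amount ξ + ξ' at once. -/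
/-- Additivity of water-filling: water-filling an amount `ξ` (reaching level `θ`)
and then an amount `ξ'` (reaching level `θ'`) on the same servers produces the same
workload vector as water-filling the amount `ξ + ξ'` at once. -/
theorem water_filling_additive
    (n : ℕ) (hn : 1 ≤ n) (W : Fin n → ℝ)
    (ξ ξ' : ℝ) (hξ : 0 < ξ) (hξ' : 0 < ξ')
    (θ θ' : ℝ)
    (hθ : ∑ i : Fin n, max (θ - W i) 0 = ξ)
    (hθ' : ∑ i : Fin n, max (θ' - max θ (W i)) 0 = ξ') :
    θ ≤ θ' ∧ (∑ i : Fin n, max (θ' - W i) 0 = ξ + ξ') ∧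
      ∀ i, max θ' (max θ (W i)) = max θ' (W i) := by
  have hle : θ ≤ θ' := by
    by_contra h
    push_neg at h
    have : ∑ i : Fin n, max (θ' - max θ (W i)) 0 = 0 := by
      apply Finset.sum_eq_zero
      intro i _
      have : θ' - max θ (W i) ≤ 0 := by
        have := le_max_left θ (W i); linarith
      simp [max_eq_right this]
    linarith
  refine ⟨hle, ?_, ?_⟩
  · have key : ∀ i : Fin n,
        max (θ' - W i) 0 = max (θ - W i) 0 + max (θ' - max θ (W i)) 0 := by
      intro i
      rcases le_total (W i) θ with h | h
      · rw [max_eq_left h]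
        rw [max_eq_left (by linarith : (0:ℝ) ≤ θ - W i),
            max_eq_left (by linarith : (0:ℝ) ≤ θ' - θ),
            max_eq_left (by linarith : (0:ℝ) ≤ θ' - W i)]
        ring
      · rw [max_eq_right h, max_eq_right (by linarith : θ - W i ≤ 0)]
        ring
    rw [Finset.sum_congr rfl (fun i _ => key i), Finset.sum_add_distrib, hθ, hθ']
  · intro i
    rcases le_total (W i) θ with h | h
    · rw [max_eq_left h, max_eq_left hle, max_eq_left (le_trans h hle)]
    · rw [max_eq_right h]
end

section
/- Let n ≥ 1, W : Fin n → ℝ, and 0 < ξ ≤ ξ'. If θ and θ' are real numbers with ∑_{i} max(θ − W_i, 0) = ξ and ∑_{i} max(θ' − W_i, 0) = ξ', then 0 ≤ θ' − θ ≤ ξ' − ξ. That is, the water-filling level is 1-Lipschitz as a function of the amount of workload placed. -/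
lemma wf_key (n : ℕ) (W : Fin n → ℝ) (a b : ℝ) (hab : a ≤ b)
    (i₀ : Fin n) (hi₀ : 0 < a - W i₀) :
    (∑ i : Fin n, max (a - W i) 0) + (b - a) ≤ ∑ i : Fin n, max (b - W i) 0 := by
  have h : ∀ i : Fin n, max (a - W i) 0 + (if i = i₀ then b - a else 0)
      ≤ max (b - W i) 0 := by
    intro i
    by_cases hi : i = i₀
    · subst hi
      have h1 : max (a - W i) 0 = a - W i := max_eq_left hi₀.le
      have h2 : max (b - W i) 0 = b - W i := max_eq_left (by linarith)
      simp [h1, h2]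
    · simp only [hi, if_false, add_zero]
      exact max_le_max (by linarith) le_rfl
  calc (∑ i : Fin n, max (a - W i) 0) + (b - a)
      = ∑ i : Fin n, (max (a - W i) 0 + (if i = i₀ then b - a else 0)) := by
        rw [Finset.sum_add_distrib, Finset.sum_ite_eq' Finset.univ i₀ (fun _ => b - a)]
        simp
    _ ≤ ∑ i : Fin n, max (b - W i) 0 := Finset.sum_le_sum (fun i _ => h i)

lemma wf_pos (n : ℕ) (W : Fin n → ℝ) (a ξ : ℝ) (hξ : 0 < ξ)
    (h : ∑ i : Fin n, max (a - W i) 0 = ξ) : ∃ i, 0 < a - W i := by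
  by_contra hc
  push_neg at hc
  have : ∑ i : Fin n, max (a - W i) 0 ≤ 0 :=
    Finset.sum_nonpos (fun i _ => by have := hc i; simp [max_le_iff]; linarith)
  linarith

/-- The water-filling level is 1-Lipschitz (and monotone) as a function of the
amount of workload placed. -/
theorem water_filling_level_lipschitz
    (n : ℕ) (hn : 1 ≤ n) (W : Fin n → ℝ)
    (ξ ξ' : ℝ) (hξ : 0 < ξ) (hξξ' : ξ ≤ ξ')
    (θ θ' : ℝ)
    (hθ : ∑ i : Fin n, max (θ - W i) 0 = ξ)
    (hθ' : ∑ i : Fin n, max (θ' - W i) 0 = ξ') :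
    0 ≤ θ' - θ ∧ θ' - θ ≤ ξ' - ξ := by
  have hθθ' : θ ≤ θ' := by
    by_contra hc
    push_neg at hc
    obtain ⟨i₀, hi₀⟩ := wf_pos n W θ' ξ' (lt_of_lt_of_le hξ hξξ') hθ'
    have := wf_key n W θ' θ hc.le i₀ hi₀
    rw [hθ, hθ'] at this
    linarith
  obtain ⟨i₀, hi₀⟩ := wf_pos n W θ ξ hξ hθ
  have := wf_key n W θ θ' hθθ' i₀ hi₀
  rw [hθ, hθ'] at this
  constructor <;> linarith
end

section
/- Let J be a finite set. For each j ∈ J let λ_j ≥ 0 and s_j ≥ 0 be reals, let k_j and d_j be positive integers with 1 ≤ k_j ≤ d_j, let b be a real with 0 < b ≤ 1, and let π_{j,m} ≥ 0 for m = 1, …, d_j be reals satisfying ∑_{m=1}^{d_j} π_{j,m} · m = b · d_j. Then ∑_{j ∈ J} λ_j s_j ≤ ∑_{j ∈ J} ∑_{m=1}^{d_j} (λ_j π_{j,m} / b) · (min(k_j, m) / k_j) · s_j. -/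
/-! The comparison is class by class. Since `k m ≤ d · min k m` whenever `k, m ≤ d`, the mean
condition `∑ π m · m = b d` gives `∑ π m · min k m ≥ b k`: on average an induced class keeps at
least the fraction `b` of the `k` components, so it brings at least the workload `λ s`. -/

open Finset

theorem mul_le_mul_min {α : Type*} [CommSemiring α] [LinearOrder α] [IsOrderedRing α]
    {k m d : α} (hk : 0 ≤ k) (hm : 0 ≤ m) (hkd : k ≤ d) (hmd : m ≤ d) :
    k * m ≤ d * min k m := by
  rcases min_cases k m with ⟨h, -⟩ | ⟨h, -⟩ <;> rw [h]
  · rw [mul_comm d]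
    exact mul_le_mul_of_nonneg_left hmd hk
  · exact mul_le_mul_of_nonneg_right hkd hm

theorem mul_le_sum_mul_min_of_sum_mul_eq {k d : ℕ} {b : ℝ} {π : ℕ → ℝ} (hkd : k ≤ d)
    (hπ : ∀ m ∈ Icc 1 d, 0 ≤ π m) (hmean : ∑ m ∈ Icc 1 d, π m * m = b * d) :
    b * k ≤ ∑ m ∈ Icc 1 d, π m * min (k : ℝ) m := by
  rcases Nat.eq_zero_or_pos d with rfl | hd
  · simp [Nat.le_zero.mp hkd]
  have hd' : (0 : ℝ) < d := by exact_mod_cast hd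
  refine le_of_mul_le_mul_left ?_ hd'
  calc (d : ℝ) * (b * k) = ∑ m ∈ Icc 1 d, π m * ((k : ℝ) * m) := by
        simp only [← mul_left_comm (k : ℝ), ← mul_sum, hmean]
        ring
    _ ≤ ∑ m ∈ Icc 1 d, π m * ((d : ℝ) * min (k : ℝ) m) := by
        refine sum_le_sum fun m hm => mul_le_mul_of_nonneg_left ?_ (hπ m hm)
        exact mul_le_mul_min (Nat.cast_nonneg _) (Nat.cast_nonneg _) (by exact_mod_cast hkd)
          (by exact_mod_cast (mem_Icc.mp hm).2)
    _ = (d : ℝ) * ∑ m ∈ Icc 1 d, π m * min (k : ℝ) m := by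
        rw [mul_sum]
        exact sum_congr rfl fun m _ => by ring

theorem B_subsystem_load_ge_general
    (J : Type*) [Fintype J]
    (lam s : J → ℝ) (hlam : ∀ j, 0 ≤ lam j) (hs : ∀ j, 0 ≤ s j)
    (k d : J → ℕ) (hk : ∀ j, 1 ≤ k j) (hkd : ∀ j, k j ≤ d j)
    (b : ℝ) (hb0 : 0 < b)
    (π : J → ℕ → ℝ) (hπ : ∀ j, ∀ m ∈ Finset.Icc 1 (d j), 0 ≤ π j m)
    (hmean : ∀ j, ∑ m ∈ Finset.Icc 1 (d j), π j m * (m : ℝ) = b * (d j : ℝ)) :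
    ∑ j, lam j * s j ≤
      ∑ j, ∑ m ∈ Finset.Icc 1 (d j),
        (lam j * π j m / b) * ((min (k j) m : ℝ) / (k j : ℝ)) * s j := by
  refine sum_le_sum fun j _ => ?_
  have hbk : 0 < b * k j := mul_pos hb0 (by exact_mod_cast hk j)
  have hfactor :
      ∑ m ∈ Icc 1 (d j), (lam j * π j m / b) * ((min (k j) m : ℝ) / (k j : ℝ)) * s j =
        lam j * s j * (∑ m ∈ Icc 1 (d j), π j m * min (k j : ℝ) m) / (b * k j) := by
    rw [mul_sum, sum_div]
    exact sum_congr rfl fun m _ => by field_simp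
  rw [hfactor, le_div_iff₀ hbk]
  exact mul_le_mul_of_nonneg_left (mul_le_sum_mul_min_of_sum_mul_eq (hkd j) (hπ j) (hmean j))
    (mul_nonneg (hlam j) (hs j))

/-- Lemma 5.4 (lem-B-load): arriving workload "prefers" servers with finite
workloads.  If `π j m` (for `1 ≤ m ≤ d j`) are nonnegative weights with mean
`∑ m, π j m * m = b * d j`, then the load `ρ = ∑ j, λ j * s j` of the full system
is at most the load `ρ_B = ∑ j, ∑ m, (λ j * π j m / b) * (min (k j) m / k j) * s j`
of the `B`-subsystem. -/
theorem B_subsystem_load_ge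
    (J : Type*) [Fintype J]
    (lam s : J → ℝ) (hlam : ∀ j, 0 ≤ lam j) (hs : ∀ j, 0 ≤ s j)
    (k d : J → ℕ) (hk : ∀ j, 1 ≤ k j) (hkd : ∀ j, k j ≤ d j)
    (b : ℝ) (hb0 : 0 < b) (hb1 : b ≤ 1)
    (π : J → ℕ → ℝ) (hπ : ∀ j, ∀ m ∈ Finset.Icc 1 (d j), 0 ≤ π j m)
    (hmean : ∀ j, ∑ m ∈ Finset.Icc 1 (d j), π j m * (m : ℝ) = b * (d j : ℝ)) :
    ∑ j, lam j * s j ≤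
      ∑ j, ∑ m ∈ Finset.Icc 1 (d j),
        (lam j * π j m / b) * ((min (k j) m : ℝ) / (k j : ℝ)) * s j :=
  B_subsystem_load_ge_general J lam s hlam hs k d hk hkd b hb0 π hπ hmean
end
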